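/- (Compression lemma) Let H and G be finite simple graphs with nested solutions, with vertex sets identified with {0,…,|V_H|−1} and {0,…,|V_G|−1} via optimal orders. If A_1 ⊆ A_2 ⊆ ⋯ ⊆ A_n are subsets of V_H × V_G, then there exist compressed sets A_1' ⊆ A_2' ⊆ ⋯ ⊆ A_n' ⊆ V_H × V_G such that |A_i| = |A_i'| and I_{H□G}(A_i) ≤ I_{H□G}(A_i') for all i ∈ {1, …, n}. -/

import Mathlib

open Finset
open scoped Classical

/-- Number of edges of `G` with both endpoints in `A`. -/
noncomputable def edgesIn {V : Type*} [Fintype V] (G : SimpleGraph V) (A : Finset V) : ℕ :=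
  (G.edgeFinset.filter (fun e => ∀ v ∈ e, v ∈ A)).card

/-- `I_G(m)`: maximum number of induced edges over all `m`-subsets. -/
noncomputable def maxEdgesIn {V : Type*} [Fintype V] (G : SimpleGraph V) (m : ℕ) : ℕ :=
  (Finset.univ.powersetCard m).sup (edgesIn G)

/-- The `δ`-sequence of `G`. -/
noncomputable def deltaSeq {V : Type*} [Fintype V] (G : SimpleGraph V) (m : ℕ) : ℤ :=
  (maxEdgesIn G m : ℤ) - (maxEdgesIn G (m - 1) : ℤ)

/-- `G` has nested solutions. -/
def hasNS {V : Type*} [Fintype V] (G : SimpleGraph V) : Prop :=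
  ∃ A : ℕ → Finset V,
    (∀ i, 1 ≤ i → i < Fintype.card V → A i ⊆ A (i + 1)) ∧
    (∀ i, 1 ≤ i → i ≤ Fintype.card V →
      (A i).card = i ∧ edgesIn G (A i) = maxEdgesIn G i)

/-- `G` is `δ`-dense. -/
def deltaDense {V : Type*} [Fintype V] (G : SimpleGraph V) : Prop :=
  ∀ i, 2 ≤ i → i ≤ Fintype.card V → deltaSeq G i ≤ deltaSeq G (i - 1) → 2 ≤ deltaSeq G i

/-- The `d`-th cartesian power of `G`. -/
def cartPower {V : Type*} (G : SimpleGraph V) (d : ℕ) : SimpleGraph (Fin d → V) where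
  Adj x y := ∃ i, G.Adj (x i) (y i) ∧ ∀ j, j ≠ i → x j = y j
  symm := by
    constructor
    rintro x y ⟨i, h, hj⟩
    exact ⟨i, h.symm, fun j hje => (hj j hje).symm⟩
  loopless := by
    constructor
    rintro x ⟨i, h, -⟩
    exact G.loopless.irrefl _ h

/-- The initial segment `{0, …, k-1}` of `Fin N`. -/
def finSeg (N k : ℕ) : Finset (Fin N) :=
  Finset.univ.filter (fun v => (v : ℕ) < k)

/-- The set of the first `m` elements under a (strict total) order `r`. -/
noncomputable def initSeg {α : Type*} [Fintype α] (r : α → α → Prop) (m : ℕ) : Finset α :=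
  Finset.univ.filter (fun u => (Finset.univ.filter (fun w => r w u)).card < m)

/-- Strict lexicographic order on tuples. -/
def lexLt {n N : ℕ} (x y : Fin n → Fin N) : Prop :=
  ∃ i, (∀ j, j < i → x j = y j) ∧ x i < y i

/-- Strict colexicographic order on tuples. -/
def colexLt {n N : ℕ} (x y : Fin n → Fin N) : Prop :=
  ∃ i, (∀ j, i < j → x j = y j) ∧ x i < y i

/-- Strict lexicographic order on pairs. -/
def lexPair {N : ℕ} (p q : Fin N × Fin N) : Prop :=
  p.1 < q.1 ∨ (p.1 = q.1 ∧ p.2 < q.2)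

/-- Strict colexicographic order on pairs. -/
def colexPair {N : ℕ} (p q : Fin N × Fin N) : Prop :=
  p.2 < q.2 ∨ (p.2 = q.2 ∧ p.1 < q.1)

/-- A subset of `Fin M × Fin N` is compressed. -/
def IsCompressed {M N : ℕ} (A : Finset (Fin M × Fin N)) : Prop :=
  (∀ a : Fin M, ∀ y y' : Fin N, (a, y) ∈ A → y' ≤ y → (a, y') ∈ A) ∧
  (∀ b : Fin N, ∀ x x' : Fin M, (x, b) ∈ A → x' ≤ x → (x', b) ∈ A)

/-- Number of boundary edges: edges with exactly one endpoint in `A`. -/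
noncomputable def edgesBd {V : Type*} [Fintype V] (G : SimpleGraph V) (A : Finset V) : ℕ :=
  (G.edgeFinset.filter (fun e => ∃ u ∈ e, ∃ v ∈ e, u ∈ A ∧ v ∉ A)).card

/-!
Compress first every row `{a} × V_G` and then every column `V_H × {b}`, replacing each line of
`A` by the initial segment of the same size. Counting ordered pairs, the edges of `H □ G` inside
`A` are the `G`-edges inside the rows plus, for every edge `ab` of `H`, the points shared by the
rows of `a` and `b`. Row compression cannot decrease the first term because initial segments of
`G` are optimal, nor the second because two initial segments share the minimum of their sizes.
Column compression is row compression for `G □ H ≃g H □ G`. Both compressions are monotone, so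
chains go to chains, and compressing the columns of a row-compressed set keeps its rows initial
segments, so the result is compressed.
-/

namespace SimpleGraph

variable {V : Type*}

noncomputable def adjPairs (G : SimpleGraph V) (S : Finset V) : Finset (V × V) :=
  {p ∈ S ×ˢ S | G.Adj p.1 p.2}

lemma card_adjPairs [Fintype V] (G : SimpleGraph V) (S : Finset V) :
    #(G.adjPairs S) = 2 * edgesIn G S := by
  let GS : SimpleGraph V :=
    { Adj := fun u v => G.Adj u v ∧ u ∈ S ∧ v ∈ S
      symm := ⟨fun _ _ ⟨h, hu, hv⟩ => ⟨h.symm, hv, hu⟩⟩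
      loopless := ⟨fun u ⟨h, _⟩ => G.loopless.irrefl u h⟩ }
  have hedges : edgesIn G S = #GS.edgeFinset := by
    unfold edgesIn
    congr 1
    ext e
    induction e with
    | _ u v => simp [GS]
  rw [hedges, two_mul_card_edgeFinset, adjPairs]
  congr 1
  ext p
  simp only [mem_filter, mem_product, mem_univ, true_and, GS]
  tauto

lemma card_adjPairs_eq_sum (G : SimpleGraph V) (S : Finset V) :
    #(G.adjPairs S) = ∑ u ∈ S, ∑ v ∈ S, if G.Adj u v then 1 else 0 := by
  rw [adjPairs, card_filter, sum_product]

lemma adjPairs_map_iso {W : Type*} {G : SimpleGraph V} {G' : SimpleGraph W} (e : G ≃g G')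
    (S : Finset V) :
    G'.adjPairs (S.map e.toEquiv.toEmbedding) =
      (G.adjPairs S).map (e.toEquiv.toEmbedding.prodMap e.toEquiv.toEmbedding) := by
  rw [adjPairs, adjPairs, ← prodMap_map_product, filter_map]
  exact congrArg _ (filter_congr fun _ _ => e.map_adj_iff)

end SimpleGraph

open SimpleGraph

lemma edgesIn_map_iso {V W : Type*} [Fintype V] [Fintype W] {G : SimpleGraph V}
    {G' : SimpleGraph W} (e : G ≃g G') (S : Finset V) :
    edgesIn G' (S.map e.toEquiv.toEmbedding) = edgesIn G S := by
  have h := congrArg card (adjPairs_map_iso e S)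
  rw [card_map, card_adjPairs, card_adjPairs] at h
  omega

lemma edgesIn_le_maxEdgesIn {V : Type*} [Fintype V] (G : SimpleGraph V) (S : Finset V) :
    edgesIn G S ≤ maxEdgesIn G #S :=
  le_sup (by simp [mem_powersetCard])

section Rows

variable {α β : Type*} [DecidableEq α] [DecidableEq β] [Fintype β]

noncomputable def row (A : Finset (α × β)) (a : α) : Finset β := {y | (a, y) ∈ A}

@[simp]
lemma mem_row {A : Finset (α × β)} {a : α} {y : β} : y ∈ row A a ↔ (a, y) ∈ A := by
  simp [row]

lemma row_mono {A B : Finset (α × β)} (h : A ⊆ B) (a : α) : row A a ⊆ row B a :=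
  fun _ hy => mem_row.2 (h (mem_row.1 hy))

variable [Fintype α]

lemma sum_sum_row {R : Type*} [AddCommMonoid R] (A : Finset (α × β)) (f : α × β → R) :
    ∑ a, ∑ y ∈ row A a, f (a, y) = ∑ p ∈ A, f p := by
  simp only [row, sum_filter]
  rw [← Fintype.sum_prod_type' (f := fun a y => if (a, y) ∈ A then f (a, y) else 0),
    ← sum_filter, filter_univ_mem]

lemma card_eq_sum_card_row (A : Finset (α × β)) : #A = ∑ a, #(row A a) := by
  rw [card_eq_sum_ones, ← sum_sum_row]
  simp only [card_eq_sum_ones]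

lemma card_adjPairs_boxProd (H : SimpleGraph α) (G : SimpleGraph β) (A : Finset (α × β)) :
    #((H □ G).adjPairs A) =
      ∑ a, #(G.adjPairs (row A a)) + ∑ a, ∑ b ∈ H.neighborFinset a, #(row A a ∩ row A b) := by
  have hsplit : ∀ a b y z, (if (H □ G).Adj (a, y) (b, z) then 1 else 0) =
      (if a = b ∧ G.Adj y z then 1 else 0) + (if H.Adj a b ∧ y = z then 1 else 0) := by
    intro a b y z
    by_cases hH : H.Adj a b <;> by_cases hG : G.Adj y z <;>
      simp [boxProd_adj, hH, hG, H.ne_of_adj, G.ne_of_adj]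
  -- `hsplit` may only fire once the pairs are split into coordinates: fired on a bare pair it
  -- leaves projections inside the decidability instances, which then block `sum_ite_irrel`
  simp only [card_adjPairs_eq_sum, ← sum_sum_row A]
  simp only [hsplit, sum_add_distrib]
  congr 1
  · simp only [ite_and, sum_ite_irrel, sum_const_zero, sum_ite_eq, mem_univ, if_true]
  · refine sum_congr rfl fun a _ => ?_
    rw [sum_comm, neighborFinset_eq_filter, sum_filter]
    refine sum_congr rfl fun b _ => ?_
    by_cases hab : H.Adj a b
    · simp only [hab, true_and, if_true, sum_ite_eq, sum_boole, filter_mem_eq_inter, Nat.cast_id]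
    · simp [hab]

end Rows

@[simp]
lemma mem_finSeg {N k : ℕ} {y : Fin N} : y ∈ finSeg N k ↔ (y : ℕ) < k := by
  simp [finSeg]

lemma card_finSeg (N k : ℕ) : #(finSeg N k) = min N k :=
  Fin.card_filter_val_lt

lemma finSeg_inter_finSeg (N k l : ℕ) : finSeg N k ∩ finSeg N l = finSeg N (min k l) := by
  ext
  simp [finSeg]

lemma edgesIn_le_edgesIn_finSeg {N : ℕ} {G : SimpleGraph (Fin N)}
    (hG : ∀ k, k ≤ N → edgesIn G (finSeg N k) = maxEdgesIn G k) (S : Finset (Fin N)) :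
    edgesIn G S ≤ edgesIn G (finSeg N #S) := by
  rw [hG _ (card_le_univ S |>.trans_eq (Fintype.card_fin N))]
  exact edgesIn_le_maxEdgesIn G S

section RowCompression

variable {α : Type*} [Fintype α] [DecidableEq α] {N : ℕ}

noncomputable def rowCompress (A : Finset (α × Fin N)) : Finset (α × Fin N) :=
  {p | (p.2 : ℕ) < #(row A p.1)}

lemma mem_rowCompress {A : Finset (α × Fin N)} {p : α × Fin N} :
    p ∈ rowCompress A ↔ (p.2 : ℕ) < #(row A p.1) := by
  simp [rowCompress]

lemma row_rowCompress (A : Finset (α × Fin N)) (a : α) :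
    row (rowCompress A) a = finSeg N #(row A a) := by
  ext
  simp only [mem_row, mem_rowCompress, mem_finSeg]

lemma mem_rowCompress_of_le {A : Finset (α × Fin N)} {a : α} {y y' : Fin N}
    (h : (a, y) ∈ rowCompress A) (hy : y' ≤ y) : (a, y') ∈ rowCompress A :=
  mem_rowCompress.2 <| lt_of_le_of_lt hy (mem_rowCompress.1 h)

lemma rowCompress_mono {A B : Finset (α × Fin N)} (h : A ⊆ B) : rowCompress A ⊆ rowCompress B :=
  fun p hp => mem_rowCompress.2 <|
    (mem_rowCompress.1 hp).trans_le (card_le_card (row_mono h p.1))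

lemma card_rowCompress (A : Finset (α × Fin N)) : #(rowCompress A) = #A := by
  simp only [card_eq_sum_card_row, row_rowCompress, card_finSeg]
  refine sum_congr rfl fun a _ => min_eq_right ?_
  exact card_le_univ _ |>.trans_eq (Fintype.card_fin N)

lemma edgesIn_boxProd_le_rowCompress (H : SimpleGraph α) {G : SimpleGraph (Fin N)}
    (hG : ∀ k, k ≤ N → edgesIn G (finSeg N k) = maxEdgesIn G k) (A : Finset (α × Fin N)) :
    edgesIn (H □ G) A ≤ edgesIn (H □ G) (rowCompress A) := by
  suffices #((H □ G).adjPairs A) ≤ #((H □ G).adjPairs (rowCompress A)) by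
    rw [card_adjPairs, card_adjPairs] at this
    omega
  rw [card_adjPairs_boxProd, card_adjPairs_boxProd]
  refine add_le_add (sum_le_sum fun a _ => ?_) (sum_le_sum fun a _ => sum_le_sum fun b _ => ?_)
  · rw [row_rowCompress, card_adjPairs, card_adjPairs]
    exact Nat.mul_le_mul_left 2 (edgesIn_le_edgesIn_finSeg hG _)
  · rw [row_rowCompress, row_rowCompress, finSeg_inter_finSeg, card_finSeg]
    exact le_min (card_le_univ _ |>.trans_eq (Fintype.card_fin N))
      (le_min (card_le_card inter_subset_left) (card_le_card inter_subset_right))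

end RowCompression

section ColCompression

variable {M N : ℕ}

noncomputable def colCompress (A : Finset (Fin M × Fin N)) : Finset (Fin M × Fin N) :=
  (rowCompress (A.map (Equiv.prodComm _ _).toEmbedding)).map (Equiv.prodComm _ _).toEmbedding

lemma mem_colCompress {A : Finset (Fin M × Fin N)} {p : Fin M × Fin N} :
    p ∈ colCompress A ↔ (p.1 : ℕ) < #{x | (x, p.2) ∈ A} := by
  simp [colCompress, mem_rowCompress, row]

lemma colCompress_mono {A B : Finset (Fin M × Fin N)} (h : A ⊆ B) :
    colCompress A ⊆ colCompress B :=
  map_subset_map.2 (rowCompress_mono (map_subset_map.2 h))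

lemma card_colCompress (A : Finset (Fin M × Fin N)) : #(colCompress A) = #A := by
  rw [colCompress, card_map, card_rowCompress, card_map]

lemma edgesIn_boxProd_le_colCompress {H : SimpleGraph (Fin M)} (G : SimpleGraph (Fin N))
    (hH : ∀ k, k ≤ M → edgesIn H (finSeg M k) = maxEdgesIn H k) (A : Finset (Fin M × Fin N)) :
    edgesIn (H □ G) A ≤ edgesIn (H □ G) (colCompress A) :=
  calc edgesIn (H □ G) A = edgesIn (G □ H) (A.map (boxProdComm H G).toEquiv.toEmbedding) :=
        (edgesIn_map_iso _ A).symm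
    _ ≤ edgesIn (G □ H) (rowCompress (A.map (boxProdComm H G).toEquiv.toEmbedding)) :=
        edgesIn_boxProd_le_rowCompress G hH _
    _ = edgesIn (H □ G) (colCompress A) := (edgesIn_map_iso (boxProdComm G H) _).symm

lemma isCompressed_colCompress {A : Finset (Fin M × Fin N)}
    (hA : ∀ a y y', (a, y) ∈ A → y' ≤ y → (a, y') ∈ A) : IsCompressed (colCompress A) := by
  refine ⟨fun a y y' h hy => ?_, fun b x x' h hx => ?_⟩
  · rw [mem_colCompress] at h ⊢
    exact h.trans_le (card_le_card fun x hx => by simpa using hA x y y' (by simpa using hx) hy)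
  · rw [mem_colCompress] at h ⊢
    exact lt_of_le_of_lt hx h

end ColCompression

/-- Compression lemma.  `H` and `G` are graphs on
`{0, …, M-1}` and `{0, …, N-1}` whose identifications are optimal orders.
Given a chain `A_1 ⊆ ⋯ ⊆ A_n` of subsets of `V_H × V_G`, there is a chain of
compressed sets `A_1' ⊆ ⋯ ⊆ A_n'` with `|A_i'| = |A_i|` and
`I_{H□G}(A_i) ≤ I_{H□G}(A_i')`. -/
theorem stmt_5 {M N : ℕ} (H : SimpleGraph (Fin M)) (G : SimpleGraph (Fin N))
    (hH : ∀ k, k ≤ M → edgesIn H (finSeg M k) = maxEdgesIn H k)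
    (hG : ∀ k, k ≤ N → edgesIn G (finSeg N k) = maxEdgesIn G k)
    (n : ℕ) (A : ℕ → Finset (Fin M × Fin N))
    (hchain : ∀ i, 1 ≤ i → i < n → A i ⊆ A (i + 1)) :
    ∃ A' : ℕ → Finset (Fin M × Fin N),
      (∀ i, 1 ≤ i → i < n → A' i ⊆ A' (i + 1)) ∧
      ∀ i, 1 ≤ i → i ≤ n →
        IsCompressed (A' i) ∧ (A' i).card = (A i).card ∧
          edgesIn (H.boxProd G) (A i) ≤ edgesIn (H.boxProd G) (A' i) := by
  refine ⟨fun i => colCompress (rowCompress (A i)), fun i h1 h2 => ?_, fun i _ _ => ⟨?_, ?_, ?_⟩⟩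
  · exact colCompress_mono (rowCompress_mono (hchain i h1 h2))
  · exact isCompressed_colCompress fun _ _ _ => mem_rowCompress_of_le
  · rw [card_colCompress, card_rowCompress]
  · exact (edgesIn_boxProd_le_rowCompress H hG _).trans (edgesIn_boxProd_le_colCompress G hH _)
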